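/- For the Kronecker sequence with irrational θ and N ≥ 2 with p = π(1), q = π(N-1): p + q ≥ N implies that N = p + q is equivalent to the statement that the gap S(i) - i takes only the two values p and -q (mod N equal classes), i.e. the three gap theorem degenerates to two gaps exactly when N = p + q. -/

import Mathlib

private lemma fract_sub_of_pos (x y : ℝ) (h : 0 < Int.fract x - Int.fract y) :
    Int.fract x - Int.fract y = Int.fract (x - y) := by
  have h1 : Int.fract (x - y) - (Int.fract x - Int.fract y) = ((⌊x⌋ - ⌊y⌋ - ⌊x - y⌋ : ℤ) : ℝ) := by
    rw [Int.fract, Int.fract, Int.fract]; push_cast; ring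
  have h2 := Int.fract_nonneg (x - y)
  have h3 := Int.fract_lt_one (x - y)
  have h4 := Int.fract_lt_one x
  have h5 := Int.fract_nonneg y
  have h6 : (⌊x⌋ - ⌊y⌋ - ⌊x - y⌋ : ℤ) = 0 := by
    have hlt : ((⌊x⌋ - ⌊y⌋ - ⌊x - y⌋ : ℤ) : ℝ) < 1 := by rw [← h1]; linarith
    have hgt : (-1 : ℝ) < ((⌊x⌋ - ⌊y⌋ - ⌊x - y⌋ : ℤ) : ℝ) := by rw [← h1]; linarith
    have hlt' : (⌊x⌋ - ⌊y⌋ - ⌊x - y⌋ : ℤ) < 1 := by exact_mod_cast hlt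
    have hgt' : (-1 : ℤ) < (⌊x⌋ - ⌊y⌋ - ⌊x - y⌋ : ℤ) := by exact_mod_cast hgt
    omega
  rw [h6] at h1; push_cast at h1; linarith

private lemma fract_add_of_lt (x y : ℝ) (h : Int.fract x + Int.fract y < 1) :
    Int.fract (x + y) = Int.fract x + Int.fract y := by
  have h1 : Int.fract (x + y) - (Int.fract x + Int.fract y) = ((⌊x⌋ + ⌊y⌋ - ⌊x + y⌋ : ℤ) : ℝ) := by
    rw [Int.fract, Int.fract, Int.fract]; push_cast; ring
  have h2 := Int.fract_nonneg (x + y)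
  have h3 := Int.fract_lt_one (x + y)
  have h4 := Int.fract_nonneg x
  have h5 := Int.fract_nonneg y
  have h6 : (⌊x⌋ + ⌊y⌋ - ⌊x + y⌋ : ℤ) = 0 := by
    have hlt : ((⌊x⌋ + ⌊y⌋ - ⌊x + y⌋ : ℤ) : ℝ) < 1 := by rw [← h1]; linarith
    have hgt : (-1 : ℝ) < ((⌊x⌋ + ⌊y⌋ - ⌊x + y⌋ : ℤ) : ℝ) := by rw [← h1]; linarith
    have hlt' : (⌊x⌋ + ⌊y⌋ - ⌊x + y⌋ : ℤ) < 1 := by exact_mod_cast hlt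
    have hgt' : (-1 : ℤ) < (⌊x⌋ + ⌊y⌋ - ⌊x + y⌋ : ℤ) := by exact_mod_cast hgt
    omega
  rw [h6] at h1; push_cast at h1; linarith

private lemma fract_add_of_ge (x y : ℝ) (h : 1 ≤ Int.fract x + Int.fract y) :
    Int.fract (x + y) = Int.fract x + Int.fract y - 1 := by
  have h1 : Int.fract (x + y) - (Int.fract x + Int.fract y) = ((⌊x⌋ + ⌊y⌋ - ⌊x + y⌋ : ℤ) : ℝ) := by
    rw [Int.fract, Int.fract, Int.fract]; push_cast; ring
  have h2 := Int.fract_nonneg (x + y)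
  have h3 := Int.fract_lt_one (x + y)
  have h4 := Int.fract_lt_one x
  have h5 := Int.fract_lt_one y
  have h6 : (⌊x⌋ + ⌊y⌋ - ⌊x + y⌋ : ℤ) = -1 := by
    have hlt : ((⌊x⌋ + ⌊y⌋ - ⌊x + y⌋ : ℤ) : ℝ) < 0 := by rw [← h1]; linarith
    have hgt : (-2 : ℝ) < ((⌊x⌋ + ⌊y⌋ - ⌊x + y⌋ : ℤ) : ℝ) := by rw [← h1]; linarith
    have hlt' : (⌊x⌋ + ⌊y⌋ - ⌊x + y⌋ : ℤ) < 0 := by exact_mod_cast hlt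
    have hgt' : (-2 : ℤ) < (⌊x⌋ + ⌊y⌋ - ⌊x + y⌋ : ℤ) := by exact_mod_cast hgt
    omega
  rw [h6] at h1; push_cast at h1; linarith




/-- For the Kronecker sequence with irrational `θ`, `N ≥ 2`, `p = π(1)`,
`q = π(N-1)`: given `p + q ≥ N`, the equality `N = p + q` holds iff the gap
`S(i) - i` takes only the two values `p` and `-q`, i.e. the three gap theorem
degenerates to two gaps exactly when `N = p + q`. -/
theorem two_gaps_iff_N_eq_p_add_q (θ : ℝ) (hθ : Irrational θ)
    (N : ℕ) [NeZero N] (hN : 2 ≤ N) (π : Equiv.Perm (Fin N))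
    (hsort : ∀ i j : Fin N, i < j →
      Int.fract ((π i : ℕ) * θ) < Int.fract ((π j : ℕ) * θ))
    (p q : ℕ) (hp : p = (π 1 : ℕ)) (hq : q = (π ⟨N - 1, by omega⟩ : ℕ))
    (hpq : N ≤ p + q) :
    N = p + q ↔
      ∀ i : Fin N,
        ((π (π.symm i + 1) : ℕ) : ℤ) - (i : ℕ) = (p : ℤ) ∨
        ((π (π.symm i + 1) : ℕ) : ℤ) - (i : ℕ) = -(q : ℤ) := by
  set G : ℤ → ℝ := fun d => Int.fract ((d : ℝ) * θ) with hGdef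
  have hGpos : ∀ d : ℤ, d ≠ 0 → 0 < G d := by
    intro d hd
    rcases lt_or_eq_of_le (Int.fract_nonneg ((d:ℝ) * θ)) with h | h
    · exact h
    · exfalso
      have hirr : Irrational ((d:ℝ) * θ) := hθ.intCast_mul hd
      have h0 : Int.fract ((d:ℝ) * θ) = 0 := h.symm
      rw [Int.fract_eq_iff] at h0
      obtain ⟨-, -, z, hz⟩ := h0
      exact hirr.ne_int z (by linarith)
  have hGlt1 : ∀ d : ℤ, G d < 1 := fun d => Int.fract_lt_one _
  have hG0 : G 0 = 0 := by simp [hGdef]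
  have hGinj : ∀ d e : ℤ, G d = G e → d = e := by
    intro d e h
    by_contra hne
    rw [Int.fract_eq_fract] at h
    obtain ⟨z, hz⟩ := h
    have : ((d - e : ℤ):ℝ) * θ = z := by push_cast; push_cast at hz; linarith
    exact (hθ.intCast_mul (by omega : d - e ≠ 0)).ne_int z this
  -- F on Fin N
  have hF : ∀ k : Fin N, Int.fract ((k:ℕ) * θ) = G ((k:ℕ) : ℤ) := by
    intro k; simp [hGdef]
  have hmono : ∀ s u : Fin N, s ≤ u →
      Int.fract ((π s : ℕ) * θ) ≤ Int.fract ((π u : ℕ) * θ) := by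
    intro s u hsu
    rcases eq_or_lt_of_le hsu with h | h
    · rw [h]
    · exact le_of_lt (hsort s u h)
  have hGadd : ∀ d e : ℤ, G (d + e) = G d + G e ∨ G (d + e) = G d + G e - 1 := by
    intro d e
    have hde : ((d + e : ℤ) : ℝ) * θ = (d:ℝ)*θ + (e:ℝ)*θ := by push_cast; ring
    rcases lt_or_ge (G d + G e) 1 with h | h
    · left; rw [hGdef]; simp only; rw [hde]; exact fract_add_of_lt _ _ h
    · right; rw [hGdef]; simp only; rw [hde]; exact fract_add_of_ge _ _ h
  have hsum_ne_one : ∀ d e : ℤ, d + e ≠ 0 → G d + G e ≠ 1 := by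
    intro d e hde h
    rcases hGadd d e with h3 | h3
    · rw [h] at h3; exact absurd h3 (ne_of_lt (hGlt1 _))
    · rw [h] at h3; norm_num at h3; exact absurd h3 (ne_of_gt (hGpos _ hde))
  have hNlast : (N - 1) < N := by omega
  have hone : ((1 : Fin N) : ℕ) = 1 := by
    have : (1 : Fin N) = ⟨1, by omega⟩ := by
      apply Fin.ext; simp [Fin.val_one', Nat.mod_eq_of_lt (by omega : 1 < N)]
    rw [this]
  have hzero : ((0 : Fin N) : ℕ) = 0 := rfl
  -- π 0 = 0
  have hπ0 : π 0 = 0 := by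
    have h1 : Int.fract ((π 0 : ℕ) * θ) ≤ Int.fract (((0:Fin N) : ℕ) * θ) := by
      have h0 : (0 : Fin N) ≤ π.symm 0 := by simp [Fin.le_def]
      have := hmono 0 (π.symm 0) h0
      rwa [π.apply_symm_apply] at this
    rw [hzero] at h1
    norm_num at h1
    by_contra hne
    have hval : ((π 0 : ℕ) : ℤ) ≠ 0 := by
      simp only [ne_eq, Int.natCast_eq_zero]
      intro h0
      exact hne (Fin.ext (by simpa using h0))
    have h2 := hGpos _ hval
    rw [← hF (π 0)] at h2
    linarith
  -- basic facts about p and q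
  have hpN : p < N := by rw [hp]; exact (π 1).isLt
  have hqN : q < N := by rw [hq]; exact (π ⟨N-1, hNlast⟩).isLt
  have hp1 : 1 ≤ p := by
    rcases Nat.eq_zero_or_pos p with h | h
    · exfalso
      have : π 1 = π 0 := by
        rw [hπ0]; apply Fin.ext; simp [← hp, h]
      have h10 : (1 : Fin N) = 0 := π.injective this
      have := congrArg Fin.val h10
      rw [hone, hzero] at this; omega
    · exact h
  have hq1 : 1 ≤ q := by
    rcases Nat.eq_zero_or_pos q with h | h
    · exfalso
      have : π ⟨N-1, hNlast⟩ = π 0 := by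
        rw [hπ0]; apply Fin.ext; simp [← hq, h]
      have h10 : (⟨N-1, hNlast⟩ : Fin N) = 0 := π.injective this
      have := congrArg Fin.val h10
      rw [hzero] at this; simp at this; omega
    · exact h
  set a : ℝ := G (p : ℤ) with ha
  set b : ℝ := G (q : ℤ) with hb
  -- minimality of a among G d for 1 ≤ d < N
  have hmin : ∀ d : ℤ, 1 ≤ d → d < N → a ≤ G d := by
    intro d h1 h2
    have hd : d.toNat < N := by omega
    set k : Fin N := ⟨d.toNat, hd⟩ with hk
    have hπk : π (π.symm k) = k := π.apply_symm_apply k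
    have ht1 : (1 : Fin N) ≤ π.symm k := by
      rw [Fin.le_def, hone]
      by_contra hcon
      push_neg at hcon
      have : π.symm k = 0 := by apply Fin.ext; omega
      rw [this, hπ0] at hπk
      have := congrArg Fin.val hπk
      simp [hk, hzero] at this
      omega
    have := hmono 1 (π.symm k) ht1
    rw [hπk] at this
    rw [hF (π 1), hF k] at this
    rw [ha, hp]
    convert this using 3 <;> simp [hk] <;> omega
  -- maximality of b among G d for 0 ≤ d < N
  have hmax : ∀ d : ℤ, 0 ≤ d → d < N → G d ≤ b := by
    intro d h1 h2
    have hd : d.toNat < N := by omega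
    set k : Fin N := ⟨d.toNat, hd⟩ with hk
    have hπk : π (π.symm k) = k := π.apply_symm_apply k
    have ht1 : π.symm k ≤ ⟨N-1, hNlast⟩ := by
      rw [Fin.le_def]
      have := (π.symm k).isLt
      simp
      omega
    have := hmono (π.symm k) ⟨N-1, hNlast⟩ ht1
    rw [hπk] at this
    rw [hF (π ⟨N-1, hNlast⟩), hF k] at this
    rw [hb, hq]
    convert this using 3 <;> simp [hk] <;> omega
  have ha_pos : 0 < a := hGpos _ (by omega)
  have ha_lt1 : a < 1 := hGlt1 _
  have hb_pos : 0 < b := hGpos _ (by omega)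
  have hb_lt1 : b < 1 := hGlt1 _
  -- injectivity of k ↦ G k on Fin N
  have hFinj : ∀ k l : Fin N, G ((k:ℕ):ℤ) = G ((l:ℕ):ℤ) → k = l := by
    intro k l h
    have := hGinj _ _ h
    apply Fin.ext
    exact_mod_cast this
  -- successor characterization
  have succ_eq : ∀ i j : Fin N, G ((i:ℕ):ℤ) < G ((j:ℕ):ℤ) →
      (∀ l : Fin N, G ((i:ℕ):ℤ) < G ((l:ℕ):ℤ) → G ((j:ℕ):ℤ) ≤ G ((l:ℕ):ℤ)) →
      π (π.symm i + 1) = j := by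
    intro i j hij hminj
    set t := π.symm i with htdef
    have hπt : π t = i := π.apply_symm_apply i
    have htlast : (t : ℕ) < N - 1 := by
      by_contra hcon
      push_neg at hcon
      have ht' : (t : ℕ) = N - 1 := by have := t.isLt; omega
      -- then i is the max, contradiction with hij
      have hle : π.symm j ≤ t := by rw [Fin.le_def, ht']; have := (π.symm j).isLt; omega
      have := hmono (π.symm j) t hle
      rw [hπt, π.apply_symm_apply] at this
      rw [hF j, hF i] at this
      linarith
    have hadd : t + 1 = ⟨(t:ℕ)+1, by omega⟩ := by
      apply Fin.ext
      have hm : ((t:ℕ)+1) % N = (t:ℕ)+1 := Nat.mod_eq_of_lt (by omega)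
      simp [Fin.add_def, hone, hm]
    have h1 : G ((i:ℕ):ℤ) < G (((π (t+1) : ℕ)):ℤ) := by
      have hlt : t < t + 1 := by rw [Fin.lt_def, hadd]; simp
      have := hsort t (t+1) hlt
      rw [hπt] at this
      rw [hF i, hF (π (t+1))] at this
      exact this
    have h2 : G (((π (t+1)):ℕ):ℤ) ≤ G ((j:ℕ):ℤ) := by
      have hlt : t < π.symm j := by
        rw [Fin.lt_def]
        by_contra hcon
        push_neg at hcon
        have hle : π.symm j ≤ t := Fin.le_def.mpr hcon
        have := hmono (π.symm j) t hle
        rw [hπt, π.apply_symm_apply] at this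
        rw [hF j, hF i] at this
        linarith
      have hle : t + 1 ≤ π.symm j := by
        rw [Fin.le_def, hadd]
        rw [Fin.lt_def] at hlt
        simpa using hlt
      have := hmono (t+1) (π.symm j) hle
      rw [π.apply_symm_apply] at this
      rw [hF j, hF (π (t+1))] at this
      exact this
    have h3 := hminj (π (t+1)) h1
    exact hFinj _ _ (le_antisymm h2 h3)
  -- Case 1: if k + p < N, successor of k is k + p
  have case1 : ∀ (i : Fin N) (hip : (i:ℕ) + p < N), π (π.symm i + 1) = ⟨(i:ℕ) + p, hip⟩ := by
    intro i hip
    set k : ℤ := ((i:ℕ):ℤ) with hkdef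
    have hk0 : 0 ≤ k := Int.natCast_nonneg _
    have hkpN : k + (p:ℤ) < (N:ℤ) := by rw [hkdef]; exact_mod_cast hip
    have stepA : ∀ e : ℤ, 1 ≤ e → e ≤ k → G e + a < 1 := by
      intro e h1 h2
      by_contra hcon
      push_neg at hcon
      have hep : (1:ℤ) ≤ e + p := by omega
      have hepN : e + (p:ℤ) < N := by omega
      rcases hGadd e p with h3 | h3
      · have h5 := hGlt1 (e + p)
        rw [h3] at h5
        rw [ha] at hcon
        linarith
      · have h4 := hmin (e+p) hep hepN
        have h5 := hGlt1 e
        rw [h3, ← ha] at h4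
        linarith
    have stepB : G k + a < 1 := by
      rcases eq_or_lt_of_le hk0 with h | h
      · rw [← h, hG0]; linarith
      · exact stepA k h (le_refl k)
    have stepC : G (k + p) = G k + a := by
      rcases hGadd k p with h3 | h3
      · rw [h3, ha]
      · exfalso
        have h4 : (0:ℝ) ≤ G (k + p) := Int.fract_nonneg _
        rw [h3, ← ha] at h4
        linarith
    have hjval : (((⟨(i:ℕ) + p, by omega⟩ : Fin N) : ℕ) : ℤ) = k + p := by
      simp only [Fin.val_mk]; push_cast; omega
    apply succ_eq
    · rw [hjval, stepC, ← hkdef]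
      linarith
    · intro l hl
      rw [hjval, stepC]
      rw [← hkdef] at hl
      set m : ℤ := ((l:ℕ):ℤ) with hmdef
      have hm0 : 0 ≤ m := Int.natCast_nonneg _
      have hmN : m < (N:ℤ) := by rw [hmdef]; exact_mod_cast l.isLt
      have hd0 : m ≠ k := by
        intro h
        rw [h] at hl
        exact lt_irrefl _ hl
      have hxy : ((m:ℝ))*θ - ((k:ℝ))*θ = (((m - k : ℤ)):ℝ)*θ := by push_cast; ring
      have key : G m - G k = G (m - k) := by
        have h := fract_sub_of_pos ((m:ℝ)*θ) ((k:ℝ)*θ) (by simp only [hGdef] at hl; linarith)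
        rw [hxy] at h
        exact h
      rcases lt_trichotomy (m - k) 0 with hmk | hmk | hmk
      · have h1 : 1 ≤ k - m := by omega
        have h2 : k - m ≤ k := by omega
        have h3 := stepA (k - m) h1 h2
        have hneg : G (m - k) = 1 - G (k - m) := by
          have hnz : Int.fract ((((k - m : ℤ)):ℝ) * θ) ≠ 0 := ne_of_gt (hGpos (k-m) (by omega))
          have h4 := Int.fract_neg hnz
          have hx : -(((((k - m) : ℤ)):ℝ)*θ) = ((((m - k) : ℤ)):ℝ)*θ := by push_cast; ring
          rw [hx] at h4
          exact h4
        rw [hneg] at key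
        linarith
      · omega
      · have h1 := hmin (m-k) (by omega) (by omega)
        linarith
  -- Case 2: if q < k, successor of k is k - q
  have case2 : ∀ (i : Fin N), q < (i:ℕ) →
      π (π.symm i + 1) = ⟨(i:ℕ) - q, Nat.lt_of_le_of_lt (Nat.sub_le _ _) i.isLt⟩ := by
    intro i hqi
    set k : ℤ := ((i:ℕ):ℤ) with hkdef
    have hk0 : 0 ≤ k := Int.natCast_nonneg _
    have hkN : k < (N:ℤ) := by rw [hkdef]; exact_mod_cast i.isLt
    have hqk : (q:ℤ) < k := by rw [hkdef]; exact_mod_cast hqi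
    have stepA : ∀ d : ℤ, 1 ≤ d → d < N - k → 1 < G d + b := by
      intro d h1 h2
      rcases lt_trichotomy (G d + b) 1 with hcon | hcon | hcon
      · exfalso
        have hdqN : d + (q:ℤ) < N := by omega
        have h3 : G (d + q) = G d + b := by
          rcases hGadd d (q:ℤ) with h3 | h3
          · rw [h3, hb]
          · exfalso
            have h4 : (0:ℝ) < G (d + q) := hGpos _ (by omega)
            rw [h3, ← hb] at h4
            linarith
        have h4 := hmax (d + q) (by omega) hdqN
        have h5 := hGpos d (by omega)
        rw [h3] at h4
        linarith
      · exact absurd (by rw [← hb]; exact hcon) (hsum_ne_one d q (by omega))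
      · exact hcon
    have hkmax : G k < b := by
      have h1 := hmax k hk0 hkN
      rcases eq_or_lt_of_le h1 with h | h
      · exfalso
        have := hGinj k q (h.trans hb)
        omega
      · exact h
    have stepC : G (k - q) = G k + 1 - b := by
      have h3 := hGadd (k - (q:ℤ)) (q:ℤ)
      rw [show k - (q:ℤ) + (q:ℤ) = k by ring, ← hb] at h3
      rcases h3 with h3 | h3
      · exfalso
        have h4 := hGpos (k - q) (by omega)
        linarith
      · linarith
    have hjval : (((⟨(i:ℕ) - q, Nat.lt_of_le_of_lt (Nat.sub_le _ _) i.isLt⟩ : Fin N) : ℕ) : ℤ)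
        = k - q := by
      simp only [Fin.val_mk]
      rw [hkdef]
      omega
    apply succ_eq
    · rw [hjval, stepC, ← hkdef]
      linarith
    · intro l hl
      rw [hjval, stepC]
      rw [← hkdef] at hl
      set m : ℤ := ((l:ℕ):ℤ) with hmdef
      have hm0 : 0 ≤ m := Int.natCast_nonneg _
      have hmN : m < (N:ℤ) := by rw [hmdef]; exact_mod_cast l.isLt
      have hd0 : m ≠ k := by
        intro h
        rw [h] at hl
        exact lt_irrefl _ hl
      have hxy : ((m:ℝ))*θ - ((k:ℝ))*θ = (((m - k : ℤ)):ℝ)*θ := by push_cast; ring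
      have key : G m - G k = G (m - k) := by
        have h := fract_sub_of_pos ((m:ℝ)*θ) ((k:ℝ)*θ) (by simp only [hGdef] at hl; linarith)
        rw [hxy] at h
        exact h
      rcases lt_trichotomy (m - k) 0 with hmk | hmk | hmk
      · have hneg : G (m - k) = 1 - G (k - m) := by
          have hnz : Int.fract ((((k - m : ℤ)):ℝ) * θ) ≠ 0 := ne_of_gt (hGpos (k-m) (by omega))
          have h4 := Int.fract_neg hnz
          have hx : -(((((k - m) : ℤ)):ℝ)*θ) = ((((m - k) : ℤ)):ℝ)*θ := by push_cast; ring
          rw [hx] at h4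
          exact h4
        have h1 := hmax (k - m) (by omega) (by omega)
        rw [hneg] at key
        linarith
      · omega
      · have h1 := stepA (m - k) (by omega) (by omega)
        linarith
  -- Case max: i = q (the maximum), successor wraps to 0
  have case_max : ∀ i : Fin N, (i:ℕ) = q → π (π.symm i + 1) = 0 := by
    intro i hiq
    have hieq : i = π ⟨N-1, hNlast⟩ := by
      apply Fin.ext; rw [hiq, hq]
    rw [hieq, π.symm_apply_apply]
    have hwrap : (⟨N-1, hNlast⟩ : Fin N) + 1 = 0 := by
      apply Fin.ext
      rw [Fin.add_def, hone]
      simp only [Fin.val_mk, hzero]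
      rw [Nat.sub_add_cancel (by omega : 1 ≤ N)]
      exact Nat.mod_self N
    rw [hwrap, hπ0]
  constructor
  · -- forward: N = p + q implies two gaps
    intro hNpq i
    by_cases h1 : (i:ℕ) + p < N
    · left
      rw [case1 i h1]
      simp only [Fin.val_mk]
      push_cast
      ring
    · rcases eq_or_lt_of_le (show q ≤ (i:ℕ) by omega) with h2 | h2
      · right
        rw [case_max i h2.symm]
        rw [hzero]
        push_cast
        omega
      · right
        rw [case2 i h2]
        simp only [Fin.val_mk]
        omega
  · -- backward: two gaps implies N = p + q
    intro h2
    set A := Finset.univ.filter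
      (fun i : Fin N => ((π (π.symm i + 1) : ℕ) : ℤ) - (i:ℕ) = (p:ℤ)) with hA
    set B := Finset.univ.filter
      (fun i : Fin N => ((π (π.symm i + 1) : ℕ) : ℤ) - (i:ℕ) = -(q:ℤ)) with hB
    have hcardA : A.card ≤ N - p := by
      have h3 : A.card ≤ (Finset.range (N - p)).card := by
        refine Finset.card_le_card_of_injOn (fun i => (i:ℕ)) ?_ ?_
        · intro i hi
          simp only [Finset.mem_coe, hA, Finset.mem_filter] at hi
          simp only [Finset.mem_coe, Finset.mem_range]
          have hlt := (π (π.symm i + 1)).isLt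
          have hi2 := hi.2
          omega
        · intro x _ y _ hxy
          exact Fin.ext hxy
      simpa using h3
    have hcardB : B.card ≤ N - q := by
      have h3 : B.card ≤ (Finset.range (N - q)).card := by
        refine Finset.card_le_card_of_injOn (fun i => (i:ℕ) - q) ?_ ?_
        · intro i _
          simp only [Finset.mem_coe, Finset.mem_range]
          have hlt := i.isLt
          omega
        · intro x hx y hy hxy
          simp only [Finset.mem_coe] at hx hy
          rw [hB, Finset.mem_filter] at hx hy
          have hx2 := hx.2
          have hy2 := hy.2
          have hqx : q ≤ (x:ℕ) := by
            have := (π (π.symm x + 1)).isLt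
            omega
          have hqy : q ≤ (y:ℕ) := by
            have := (π (π.symm y + 1)).isLt
            omega
          simp only at hxy
          exact Fin.ext (by omega)
      simpa using h3
    have hdisj : Disjoint A B := by
      rw [Finset.disjoint_filter]
      intro i _ hip hiq
      rw [hip] at hiq
      omega
    have hunion : A ∪ B = Finset.univ := by
      apply Finset.eq_univ_iff_forall.mpr
      intro i
      rw [Finset.mem_union, hA, hB, Finset.mem_filter, Finset.mem_filter]
      rcases h2 i with h | h
      · exact Or.inl ⟨Finset.mem_univ i, h⟩
      · exact Or.inr ⟨Finset.mem_univ i, h⟩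
    have hcard : A.card + B.card = N := by
      rw [← Finset.card_union_of_disjoint hdisj, hunion, Finset.card_univ, Fintype.card_fin]
    omega
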